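/- Let G = (ℕ, E) be an infinite digraph. If deg⁺(i) < ∞ for all i ∈ ℕ, then the adjacency operator A is densely defined, the adjoint of A₀ equals B (so A* ⊆ A₀* = B) and B is closed. Symmetrically, if deg⁻(i) < ∞ for all i ∈ ℕ, then B is densely defined, the adjoint of B₀ equals A (so B* ⊆ B₀* = A) and A is closed. -/

import Mathlib

/-!
Write `ωᴴ i k = conj (ω k i)` for the conjugate transpose. If every row `ω i` lies in `ℓ²`, every
basis vector `δ_i` lies in the domain of `A = OmegaOp ω`, with `A δ_i = ω i`. Testing `A₀*` against
`δ_i` gives `(A₀* y)_i = ⟪ω i, y⟫ = ∑ₖ y_k conj (ω i k)`, hence `A₀* ⊆ OmegaOp ωᴴ`. Conversely, for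
finitely supported `x` the finite sum over `i` in `(A x)_k` commutes with the series over `k`, so
`OmegaOp ωᴴ` is a formal adjoint of `A₀` and is contained in `A₀*`. Closedness of `A₀* = OmegaOp ωᴴ`
and `A* ⊆ A₀*` hold for adjoints in general. For a `{0,1}` adjacency matrix `ωᴴ` is the transpose,
and finite out-degrees (in-degrees) make the rows of `A` (of `B`) finitely supported.
-/

noncomputable section

open Complex

/-- The Hilbert space `ℓ²(ℕ, ℂ)`. -/
abbrev L2 : Type := lp (fun _ : ℕ => ℂ) 2

/-- The (everywhere-given, possibly junk-valued) formula for the weighted adjacency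
operator: `(Ω v) k = ∑' i, v i * ω i k`. -/
def OmF (ω : ℕ → ℕ → ℂ) (v : ℕ → ℂ) : ℕ → ℂ := fun k => ∑' i, v i * ω i k

/-- The domain of the weighted adjacency operator. -/
def OmDom (ω : ℕ → ℕ → ℂ) : Submodule ℂ L2 where
  carrier := {v : L2 | (∀ k, Summable fun i => (v : ℕ → ℂ) i * ω i k) ∧ Memℓp (OmF ω (v : ℕ → ℂ)) 2}
  zero_mem' := by
    constructor
    · intro k
      simp only [lp.coeFn_zero, Pi.zero_apply, zero_mul]
      exact summable_zero
    · have : OmF ω ((0 : L2) : ℕ → ℂ) = 0 := by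
        funext k
        simp [OmF, lp.coeFn_zero]
      rw [this]
      exact zero_memℓp
  add_mem' := by
    rintro a b ⟨ha1, ha2⟩ ⟨hb1, hb2⟩
    constructor
    · intro k
      have : (fun i => ((a + b : L2) : ℕ → ℂ) i * ω i k)
          = fun i => (a : ℕ → ℂ) i * ω i k + (b : ℕ → ℂ) i * ω i k := by
        funext i
        simp [lp.coeFn_add, add_mul]
      rw [this]
      exact (ha1 k).add (hb1 k)
    · have : OmF ω ((a + b : L2) : ℕ → ℂ) = OmF ω (a : ℕ → ℂ) + OmF ω (b : ℕ → ℂ) := by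
        funext k
        simp only [OmF, Pi.add_apply]
        rw [← Summable.tsum_add (ha1 k) (hb1 k)]
        congr 1
        funext i
        simp [lp.coeFn_add, add_mul]
      rw [this]
      exact ha2.add hb2
  smul_mem' := by
    rintro c a ⟨ha1, ha2⟩
    constructor
    · intro k
      have : (fun i => ((c • a : L2) : ℕ → ℂ) i * ω i k)
          = fun i => c * ((a : ℕ → ℂ) i * ω i k) := by
        funext i
        simp [lp.coeFn_smul, mul_assoc]
      rw [this]
      exact (ha1 k).mul_left c
    · have : OmF ω ((c • a : L2) : ℕ → ℂ) = c • OmF ω (a : ℕ → ℂ) := by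
        funext k
        simp only [OmF, Pi.smul_apply, smul_eq_mul]
        rw [← tsum_mul_left]
        congr 1
        funext i
        simp [lp.coeFn_smul, mul_assoc]
      rw [this]
      exact ha2.const_smul c

theorem mem_OmDom {ω : ℕ → ℕ → ℂ} {v : L2} :
    v ∈ OmDom ω ↔ (∀ k, Summable fun i => (v : ℕ → ℂ) i * ω i k) ∧
      Memℓp (OmF ω (v : ℕ → ℂ)) 2 := Iff.rfl

/-- The underlying linear map of the weighted adjacency operator. -/
def OmLM (ω : ℕ → ℕ → ℂ) : OmDom ω →ₗ[ℂ] L2 where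
  toFun v := ⟨OmF ω ((v : L2) : ℕ → ℂ), (mem_OmDom.mp v.2).2⟩
  map_add' a b := by
    apply Subtype.ext
    funext k
    simp only [lp.coeFn_add, Pi.add_apply]
    show OmF ω (((a : L2) + (b : L2) : L2) : ℕ → ℂ) k = _
    simp only [OmF]
    rw [← Summable.tsum_add ((mem_OmDom.mp a.2).1 k) ((mem_OmDom.mp b.2).1 k)]
    congr 1
    funext i
    simp [lp.coeFn_add, add_mul]
  map_smul' c a := by
    apply Subtype.ext
    funext k
    simp only [lp.coeFn_smul, Pi.smul_apply, RingHom.id_apply, smul_eq_mul]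
    show OmF ω ((c • (a : L2) : L2) : ℕ → ℂ) k = _
    simp only [OmF]
    rw [← tsum_mul_left]
    congr 1
    funext i
    simp [lp.coeFn_smul, mul_assoc]

/-- The weighted adjacency operator `Ω` as an unbounded operator on `ℓ²(ℕ,ℂ)`. -/
def OmegaOp (ω : ℕ → ℕ → ℂ) : L2 →ₗ.[ℂ] L2 := ⟨OmDom ω, OmLM ω⟩

/-- The subspace `D₀` of finitely supported sequences: the span of the standard basis. -/
def finSupp : Submodule ℂ L2 := Submodule.span ℂ (Set.range fun i : ℕ => lp.single 2 i (1 : ℂ))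

end

/-- The `{0,1}`-valued adjacency matrix of a digraph on `ℕ` with edge set `E`. -/
noncomputable def adjC (E : Set (ℕ × ℕ)) (i k : ℕ) : ℂ := E.indicator (fun _ => (1 : ℂ)) (i, k)

open scoped ComplexConjugate

namespace LinearPMap

variable {𝕜 E F : Type*} [RCLike 𝕜] [NormedAddCommGroup E] [InnerProductSpace 𝕜 E]
  [NormedAddCommGroup F] [InnerProductSpace 𝕜 F] [CompleteSpace E]

theorem adjoint_le_adjoint_of_le {S T : E →ₗ.[𝕜] F} (hST : S ≤ T)
    (hS : Dense (S.domain : Set E)) :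
    T.adjoint ≤ S.adjoint := by
  have hT : T.IsFormalAdjoint T.adjoint :=
    (adjoint_isFormalAdjoint (hS.mono hST.1)).symm
  refine IsFormalAdjoint.le_adjoint hS fun x y => ?_
  rw [hST.2 (y := ⟨x, hST.1 x.2⟩) rfl]
  exact hT _ y

end LinearPMap

theorem dense_finSupp : Dense (finSupp : Set L2) := by
  have h : (Set.range fun i => lp.single 2 i (1 : ℂ)) =
      Set.range (default : HilbertBasis ℕ ℂ L2) := by
    ext x
    simp only [Set.mem_range, ← HilbertBasis.repr_symm_single]
    rfl
  refine Submodule.dense_iff_topologicalClosure_eq_top.mpr ?_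
  rw [finSupp, h]
  exact HilbertBasis.dense_span _

theorem finite_support_of_mem_finSupp {v : L2} (hv : v ∈ finSupp) :
    {i | (v : ℕ → ℂ) i ≠ 0}.Finite := by
  induction hv using Submodule.span_induction with
  | mem x hx =>
    obtain ⟨i, rfl⟩ := hx
    refine (Set.finite_singleton i).subset fun j hj => ?_
    by_contra hji
    exact hj (lp.single_apply_ne 2 i _ hji)
  | zero => simp
  | add x y _ _ hx hy =>
    refine (hx.union hy).subset fun j hj => ?_
    contrapose! hj
    simp_all
  | smul c x _ hx =>
    refine hx.subset fun j hj => ?_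
    contrapose! hj
    simp_all

section OmegaOp

variable {ω : ℕ → ℕ → ℂ}

theorem OmF_eq_sum {v : ℕ → ℂ} {s : Finset ℕ} (hs : ∀ i ∉ s, v i = 0) (k : ℕ) :
    OmF ω v k = ∑ i ∈ s, v i * ω i k :=
  tsum_eq_sum fun i hi => by rw [hs i hi, zero_mul]

theorem OmF_single (i : ℕ) : OmF ω (lp.single 2 i (1 : ℂ) : ℕ → ℂ) = ω i := by
  funext k
  rw [OmF_eq_sum (s := {i}) fun j hj => lp.single_apply_ne 2 i _ (by simpa using hj)]
  simp

theorem single_mem_OmDom (hrow : ∀ i, Memℓp (ω i) 2) (i : ℕ) :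
    lp.single 2 i (1 : ℂ) ∈ OmDom ω := by
  refine ⟨fun k => summable_of_ne_finset_zero (s := {i}) fun j hj => ?_, ?_⟩
  · rw [lp.single_apply_ne 2 i _ (by simpa using hj), zero_mul]
  · rw [OmF_single]
    exact hrow i

theorem finSupp_le_OmDom (hrow : ∀ i, Memℓp (ω i) 2) : finSupp ≤ OmDom ω := by
  rw [finSupp, Submodule.span_le]
  rintro _ ⟨i, rfl⟩
  exact single_mem_OmDom hrow i

theorem dense_domain_OmegaOp (hrow : ∀ i, Memℓp (ω i) 2) :
    Dense ((OmegaOp ω).domain : Set L2) :=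
  dense_finSupp.mono (finSupp_le_OmDom hrow)

theorem domRestrict_finSupp_domain (hrow : ∀ i, Memℓp (ω i) 2) :
    ((OmegaOp ω).domRestrict finSupp).domain = finSupp :=
  inf_eq_left.mpr (finSupp_le_OmDom hrow)

theorem dense_domain_domRestrict_finSupp (hrow : ∀ i, Memℓp (ω i) 2) :
    Dense (((OmegaOp ω).domRestrict finSupp).domain : Set L2) := by
  rw [domRestrict_finSupp_domain hrow]
  exact dense_finSupp

theorem summable_mul_conj_row (hrow : ∀ i, Memℓp (ω i) 2) (y : L2) (i : ℕ) :
    Summable fun k => (y : ℕ → ℂ) k * conj (ω i k) := by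
  refine (lp.summable_inner (⟨ω i, hrow i⟩ : L2) y).congr fun k => ?_
  simp

theorem adjoint_domRestrict_finSupp_apply (hrow : ∀ i, Memℓp (ω i) 2)
    (y : ((OmegaOp ω).domRestrict finSupp).adjoint.domain) (i : ℕ) :
    ((((OmegaOp ω).domRestrict finSupp).adjoint y : L2) : ℕ → ℂ) i =
      ∑' k, ((y : L2) : ℕ → ℂ) k * conj (ω i k) := by
  let e : ((OmegaOp ω).domRestrict finSupp).domain :=
    ⟨lp.single 2 i 1, Submodule.subset_span ⟨i, rfl⟩, single_mem_OmDom hrow i⟩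
  have hTe : (((OmegaOp ω).domRestrict finSupp e : L2) : ℕ → ℂ) = ω i := OmF_single i
  have h := (LinearPMap.adjoint_isFormalAdjoint (dense_domain_domRestrict_finSupp hrow)).symm e y
  rw [lp.inner_single_left, lp.inner_eq_tsum, hTe] at h
  simpa [mul_comm] using h.symm

theorem adjoint_domRestrict_finSupp_le (hrow : ∀ i, Memℓp (ω i) 2) :
    ((OmegaOp ω).domRestrict finSupp).adjoint ≤ OmegaOp fun i k => conj (ω k i) := by
  have hcoord : ∀ y : ((OmegaOp ω).domRestrict finSupp).adjoint.domain,
      OmF (fun i k => conj (ω k i)) ((y : L2) : ℕ → ℂ) =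
        ((((OmegaOp ω).domRestrict finSupp).adjoint y : L2) : ℕ → ℂ) :=
    fun y => funext fun i => (adjoint_domRestrict_finSupp_apply hrow y i).symm
  refine ⟨fun y hy => ⟨summable_mul_conj_row hrow y, ?_⟩, fun y z hyz => ?_⟩
  · rw [hcoord ⟨y, hy⟩]
    exact lp.memℓp _
  · apply lp.ext
    rw [← hcoord y]
    change OmF _ _ = OmF _ _
    rw [hyz]

theorem isFormalAdjoint_domRestrict_finSupp (hrow : ∀ i, Memℓp (ω i) 2) :
    ((OmegaOp ω).domRestrict finSupp).IsFormalAdjoint (OmegaOp fun i k => conj (ω k i)) := by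
  intro x y
  set u : ℕ → ℂ := ((x : L2) : ℕ → ℂ)
  set w : ℕ → ℂ := ((y : L2) : ℕ → ℂ)
  obtain ⟨s, hs⟩ : ∃ s : Finset ℕ, ∀ i ∉ s, u i = 0 :=
    ⟨(finite_support_of_mem_finSupp x.2.1).toFinset, fun i hi => by simpa using hi⟩
  calc inner ℂ ((OmegaOp ω).domRestrict finSupp x) (y : L2)
      = ∑' k, w k * conj (OmF ω u k) := by
        rw [lp.inner_eq_tsum]
        rfl
    _ = ∑' k, ∑ i ∈ s, w k * conj (ω i k) * conj (u i) := by
        refine tsum_congr fun k => ?_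
        rw [OmF_eq_sum hs, map_sum, Finset.mul_sum]
        refine Finset.sum_congr rfl fun i _ => ?_
        rw [map_mul]
        ring
    _ = ∑ i ∈ s, (∑' k, w k * conj (ω i k)) * conj (u i) := by
        rw [Summable.tsum_finsetSum fun i _ => (summable_mul_conj_row hrow y i).mul_right _]
        simp_rw [tsum_mul_right]
        rfl
    _ = inner ℂ (x : L2) (OmegaOp (fun i k => conj (ω k i)) y) := by
        rw [lp.inner_eq_tsum, tsum_eq_sum (s := s) fun i hi => by
          simp [show ((x : L2) : ℕ → ℂ) i = 0 from hs i hi]]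
        rfl

theorem adjoint_domRestrict_finSupp (hrow : ∀ i, Memℓp (ω i) 2) :
    ((OmegaOp ω).domRestrict finSupp).adjoint = OmegaOp fun i k => conj (ω k i) :=
  le_antisymm (adjoint_domRestrict_finSupp_le hrow)
    ((isFormalAdjoint_domRestrict_finSupp hrow).le_adjoint
      (dense_domain_domRestrict_finSupp hrow))

theorem OmegaOp_adjoint_summary (hrow : ∀ i, Memℓp (ω i) 2) :
    Dense ((OmegaOp ω).domain : Set L2) ∧
      ((OmegaOp ω).domRestrict finSupp).adjoint = (OmegaOp fun i k => conj (ω k i)) ∧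
      (OmegaOp ω).adjoint ≤ ((OmegaOp ω).domRestrict finSupp).adjoint ∧
      (OmegaOp fun i k => conj (ω k i)).IsClosed := by
  have hdense := dense_domain_domRestrict_finSupp hrow
  refine ⟨dense_domain_OmegaOp hrow, adjoint_domRestrict_finSupp hrow,
    LinearPMap.adjoint_le_adjoint_of_le LinearPMap.domRestrict_le hdense, ?_⟩
  rw [← adjoint_domRestrict_finSupp hrow]
  exact LinearPMap.adjoint_isClosed hdense

end OmegaOp

theorem memℓp_of_eq_zero_off_finite {α : Type*} {E : α → Type*} [∀ a, NormedAddCommGroup (E a)]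
    {f : ∀ a, E a} {s : Set α} (hs : s.Finite) (hf : ∀ a ∉ s, f a = 0) (p : ENNReal) :
    Memℓp f p :=
  (memℓp_zero (hs.subset fun a ha => by_contra fun h => ha (hf a h))).of_exponent_ge zero_le

theorem adjC_of_notMem {E : Set (ℕ × ℕ)} {i k : ℕ} (h : (i, k) ∉ E) : adjC E i k = 0 :=
  Set.indicator_of_notMem h _

theorem conj_adjC (E : Set (ℕ × ℕ)) (i k : ℕ) : conj (adjC E i k) = adjC E i k := by
  by_cases h : (i, k) ∈ E
  · simp [adjC, Set.indicator_of_mem h]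
  · rw [adjC_of_notMem h, map_zero]

/-- Let `G = (ℕ, E)` be an infinite digraph, `A = OmegaOp (adjC E)` its
adjacency operator and `B = OmegaOp (fun i k => adjC E k i)` (so `(B v) k = ∑' i, v i * a k i`).
If `deg⁺ i < ∞` for all `i`, then `A` is densely defined, the adjoint of its restriction
`A₀` to the finitely supported sequences equals `B` (so `A* ⊆ A₀* = B`), and `B` is closed.
Symmetrically, if `deg⁻ i < ∞` for all `i`, then `B` is densely defined, `B₀* = A`
(so `B* ⊆ B₀* = A`), and `A` is closed. -/
theorem stmt_2 (E : Set (ℕ × ℕ)) :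
    ((∀ i : ℕ, {k : ℕ | (i, k) ∈ E}.Finite) →
      Dense ((OmegaOp (adjC E)).domain : Set L2) ∧
      ((OmegaOp (adjC E)).domRestrict finSupp).adjoint = OmegaOp (fun i k => adjC E k i) ∧
      (OmegaOp (adjC E)).adjoint ≤ ((OmegaOp (adjC E)).domRestrict finSupp).adjoint ∧
      (OmegaOp (fun i k => adjC E k i)).IsClosed) ∧
    ((∀ i : ℕ, {k : ℕ | (k, i) ∈ E}.Finite) →
      Dense ((OmegaOp (fun i k => adjC E k i)).domain : Set L2) ∧
      ((OmegaOp (fun i k => adjC E k i)).domRestrict finSupp).adjoint = OmegaOp (adjC E) ∧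
      (OmegaOp (fun i k => adjC E k i)).adjoint ≤
        ((OmegaOp (fun i k => adjC E k i)).domRestrict finSupp).adjoint ∧
      (OmegaOp (adjC E)).IsClosed) := by
  refine ⟨fun hout => ?_, fun hin => ?_⟩
  · simpa only [conj_adjC] using OmegaOp_adjoint_summary (ω := adjC E) fun i =>
      memℓp_of_eq_zero_off_finite (hout i) (fun k hk => adjC_of_notMem hk) 2
  · simpa only [conj_adjC] using OmegaOp_adjoint_summary (ω := fun i k => adjC E k i) fun i =>
      memℓp_of_eq_zero_off_finite (hin i) (fun k hk => adjC_of_notMem hk) 2
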